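/- arXiv:1409.7856 — 2 statements merged into one kernel-verified Lean document; each statement's English description precedes it below -/
import Mathlib

section
/- For a, b in a field of characteristic 3 with a ≠ 0: the polynomial z^4 + (b/a - 1/a^4)*z^3 + (b^3/a^3 + 1/a^4)*z + b^4/a^4 equals (z + α)^4 for some α if and only if a^8 = -1 and a*b^3 - a^3*b + 1 = 0 (with α = b/a - 1/a^4 up to the stated relations); in particular, under these relations the quartic in z is a fourth power of a linear polynomial. -/
/-!
In characteristic 3 the Frobenius gives `(X + C α) ^ 4 = (X + C α) (X ^ 3 + C α ^ 3)`, so the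
quartic is a fourth power exactly when its coefficients are `α, α ^ 3, α ^ 4` with `α` forced
to be the `X ^ 3`-coefficient `b / a - 1 / a ^ 4`. Cubing that coefficient with the Frobenius
again, the `X`-coefficient condition reduces to `a ^ 8 = -1`; using `a ^ 8 = -1`, the constant
coefficient condition becomes `a b ^ 3 - a ^ 3 b + 1 = 0`.
-/

open Polynomial

theorem X_add_C_pow_four_of_charP_three {R : Type*} [CommRing R] [CharP R 3] (α : R) :
    (X + C α) ^ 4 = X ^ 4 + C α * X ^ 3 + C (α ^ 3) * X + C (α ^ 4) := by
  rw [pow_succ, add_pow_char, map_pow, map_pow]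
  ring

theorem X_pow_four_add_C_mul_X_pow_three_add_C_mul_X_add_C_inj {R : Type*} [CommRing R]
    {p q r p' q' r' : R} :
    (X ^ 4 + C p * X ^ 3 + C q * X + C r : R[X]) = X ^ 4 + C p' * X ^ 3 + C q' * X + C r' ↔
      p = p' ∧ q = q' ∧ r = r' := by
  constructor
  · intro h
    have hcoeff (n : ℕ) := congrArg (coeff · n) h
    exact ⟨by simpa using hcoeff 3, by simpa using hcoeff 1, by simpa using hcoeff 0⟩
  · rintro ⟨rfl, rfl, rfl⟩
    rfl

section CharThree

variable {K : Type*} [Field K] [CharP K 3] {a : K}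

theorem div_sub_one_div_pow_four_pow_three (b : K) :
    (b / a - 1 / a ^ 4) ^ 3 = b ^ 3 / a ^ 3 - 1 / a ^ 12 := by
  rw [sub_pow_char, div_pow, div_pow, one_pow, ← pow_mul]

theorem div_add_one_div_eq_pow_three_iff (ha : a ≠ 0) (b : K) :
    b ^ 3 / a ^ 3 + 1 / a ^ 4 = (b / a - 1 / a ^ 4) ^ 3 ↔ a ^ 8 = -1 := by
  rw [div_sub_one_div_pow_four_pow_three, sub_eq_add_neg, add_right_inj]
  field_simp

theorem div_pow_four_eq_pow_four_iff (ha : a ≠ 0) (h8 : a ^ 8 = -1) (b : K) :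
    b ^ 4 / a ^ 4 = (b / a - 1 / a ^ 4) ^ 4 ↔ a * b ^ 3 - a ^ 3 * b + 1 = 0 := by
  rw [pow_succ (b / a - 1 / a ^ 4) 3, div_sub_one_div_pow_four_pow_three]
  field_simp
  constructor <;> intro h <;> linear_combination -h + b ^ 3 * a * h8

end CharThree

theorem stmt_15 (K : Type*) [Field K] [CharP K 3] (a b : K) (ha : a ≠ 0) :
    (∃ α : K,
        (X ^ 4 + C (b / a - 1 / a ^ 4) * X ^ 3 + C (b ^ 3 / a ^ 3 + 1 / a ^ 4) * X
            + C (b ^ 4 / a ^ 4) : Polynomial K) = (X + C α) ^ 4) ↔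
      (a ^ 8 = -1 ∧ a * b ^ 3 - a ^ 3 * b + 1 = 0) := by
  simp_rw [X_add_C_pow_four_of_charP_three, X_pow_four_add_C_mul_X_pow_three_add_C_mul_X_add_C_inj,
    exists_eq_left']
  rw [div_add_one_div_eq_pow_three_iff ha]
  exact and_congr_right (div_pow_four_eq_pow_four_iff ha · b)
end

section
/- For the matrix M above, the quotient group ker(I + M + M^2 + M^3) / im(M - I) is isomorphic to Z/4Z × Z/4Z. -/
/-!
Reducing two integer linear forms `W` modulo 4 gives a map `ker N → (ℤ/4)²`, where
`N = 1 + M + M² + M³`. It kills `im (M - 1)` because `W (M - 1) ≡ 0 mod 4`, and it is onto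
because some integer matrix `S` has `N S = 0` and `W S = 1`. For its kernel, exhibit integer
matrices `P`, `Q` with `(M - 1)(4P + QW) = 4 + X N`: if `x ∈ ker N` and `W x = 4c`, then
`x = (M - 1)(P x + Q c)`. All of `W`, `P`, `Q`, `S` are read off a Smith normal form of `M - 1`,
and the identities between them are finite integer computations.
-/

open Matrix

/-- The matrix of the Frobenius action on the geometric Picard group. -/
def M : Matrix (Fin 8) (Fin 8) ℤ :=
  !![-1,  0, -1,  0, -1, -1, -1, -2;
     -1, -1, -1,  0, -1,  0, -1, -2;
      0,  0, -1,  0,  0,  0, -1, -1;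
     -1, -1, -2, -1, -1, -1, -1, -3;
      0, -1, -1,  0, -1, -1, -1, -2;
     -1, -1, -1,  0,  0, -1, -1, -2;
     -1, -1, -1, -1, -1, -1, -2, -3;
      2,  2,  3,  1,  2,  2,  3,  6]

/-- The norm map `1 + M + M² + M³` acting on `ℤ⁸`. -/
noncomputable def normMap : (Fin 8 → ℤ) →ₗ[ℤ] (Fin 8 → ℤ) :=
  Matrix.toLin' (1 + M + M ^ 2 + M ^ 3)

/-- The map `M - 1` acting on `ℤ⁸`. -/
noncomputable def diffMap : (Fin 8 → ℤ) →ₗ[ℤ] (Fin 8 → ℤ) :=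
  Matrix.toLin' (M - 1)

theorem Submodule.nonempty_quotient_comap_equiv_of_ker {R E F : Type*} [Ring R]
    [AddCommGroup E] [Module R E] [AddCommGroup F] [Module R F] (K N : Submodule R E)
    (f : E →ₗ[R] F) (hker : ∀ x ∈ K, f x = 0 ↔ x ∈ N) (hsurj : ∀ y, ∃ x ∈ K, f x = y) :
    Nonempty ((K ⧸ N.comap K.subtype) ≃ₗ[R] F) := by
  set g := f ∘ₗ K.subtype
  have hg_ker : LinearMap.ker g = N.comap K.subtype := by
    ext x
    exact hker x x.2
  have hg_surj : Function.Surjective g := fun y ↦ by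
    obtain ⟨x, hxK, rfl⟩ := hsurj y
    exact ⟨⟨x, hxK⟩, rfl⟩
  exact ⟨(Submodule.quotEquivOfEq _ _ hg_ker.symm).trans (g.quotKerEquivOfSurjective hg_surj)⟩

theorem Int.cast_comp_eq_zero_iff {ι : Type*} {k : ℕ} (v : ι → ℤ) :
    (((↑) : ℤ → ZMod k) ∘ v) = 0 ↔ ∃ c, v = (k : ℤ) • c := by
  constructor
  · intro h
    have hdvd i : (k : ℤ) ∣ v i := (ZMod.intCast_zmod_eq_zero_iff_dvd _ _).1 (congrFun h i)
    choose c hc using hdvd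
    exact ⟨c, funext hc⟩
  · rintro ⟨c, rfl⟩
    ext i
    simp

namespace Matrix

variable {m n : Type*} [Fintype n]

def mulVecModLin (W : Matrix m n ℤ) (k : ℕ) : (n → ℤ) →ₗ[ℤ] m → ZMod k :=
  (Int.castAddHom (ZMod k)).toIntLinearMap.compLeft m ∘ₗ W.mulVecLin

theorem mulVecModLin_apply (W : Matrix m n ℤ) (k : ℕ) (x : n → ℤ) :
    W.mulVecModLin k x = ((↑) : ℤ → ZMod k) ∘ (W *ᵥ x) := rfl

theorem mulVecModLin_eq_zero_iff (W : Matrix m n ℤ) (k : ℕ) (x : n → ℤ) :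
    W.mulVecModLin k x = 0 ↔ ∃ c, W *ᵥ x = (k : ℤ) • c :=
  Int.cast_comp_eq_zero_iff _

theorem mem_range_toLin'_of_mul_eq [Fintype m] [DecidableEq n] {A D P X : Matrix n n ℤ}
    {W : Matrix m n ℤ} {Q : Matrix n m ℤ} {k : ℤ} (hk : k ≠ 0)
    (hinv : D * (k • P + Q * W) = k • 1 + X * A)
    {x : n → ℤ} (hx : A *ᵥ x = 0) {c : m → ℤ} (hc : W *ᵥ x = k • c) :
    x ∈ LinearMap.range (toLin' D) := by
  refine ⟨P *ᵥ x + Q *ᵥ c, smul_right_injective _ hk ?_⟩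
  calc k • toLin' D (P *ᵥ x + Q *ᵥ c)
      = (D * (k • P + Q * W)) *ᵥ x := by
        simp only [toLin'_apply, ← mulVec_mulVec, mulVec_add, add_mulVec, smul_mulVec,
          mulVec_smul, hc, smul_add]
    _ = k • x := by
        simp only [hinv, add_mulVec, smul_mulVec, one_mulVec, ← mulVec_mulVec, hx, mulVec_zero,
          add_zero]

theorem nonempty_ker_quotient_range_equiv [Fintype m] [DecidableEq m] [DecidableEq n]
    {A D P X : Matrix n n ℤ} {W E : Matrix m n ℤ} {Q S : Matrix n m ℤ} {k : ℕ} (hk : k ≠ 0)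
    (hWD : W * D = (k : ℤ) • E) (hinv : D * ((k : ℤ) • P + Q * W) = (k : ℤ) • 1 + X * A)
    (hAS : A * S = 0) (hWS : W * S = 1) :
    Nonempty ((LinearMap.ker (toLin' A) ⧸
      (LinearMap.range (toLin' D)).comap (LinearMap.ker (toLin' A)).subtype) ≃ₗ[ℤ]
        (m → ZMod k)) := by
  refine Submodule.nonempty_quotient_comap_equiv_of_ker _ _ (W.mulVecModLin k) ?_ ?_
  · intro x hx
    rw [mulVecModLin_eq_zero_iff]
    constructor
    · rintro ⟨c, hc⟩
      exact mem_range_toLin'_of_mul_eq (Int.natCast_ne_zero.2 hk) hinv hx hc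
    · rintro ⟨y, rfl⟩
      exact ⟨E *ᵥ y, by rw [toLin'_apply, mulVec_mulVec, hWD, smul_mulVec]⟩
  · intro y
    obtain ⟨c, rfl⟩ := ZMod.intCast_surjective.comp_left y
    refine ⟨S *ᵥ c, ?_, ?_⟩
    · rw [LinearMap.mem_ker, toLin'_apply, mulVec_mulVec, hAS, zero_mulVec]
    · rw [mulVecModLin_apply, mulVec_mulVec, hWS, one_mulVec]

end Matrix

def brauerForms : Matrix (Fin 2) (Fin 8) ℤ :=
  !![0,  4,  1, 1,  0,  0, 1,  3;
     0, -3, -1, 1, -1, -2, 0, -2]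

def brauerLift : Matrix (Fin 8) (Fin 2) ℤ :=
  !![-1, 1; 0, 0; 0, 0; 0, 0; 0, -1; 0, 0; 1, 0; 0, 0]

def diffPreimage : Matrix (Fin 8) (Fin 8) ℤ :=
  !![0, -5, -1,  1, 0, -1, 0, -2;
     0,  0,  0,  0, 0,  0, 0,  0;
     0, -2, -1,  0, 0,  0, 0, -1;
     0,  0,  0,  0, 0,  0, 0,  0;
     0, -1,  0,  0, 0,  1, 0,  0;
     0,  0,  0,  0, 0,  0, 0,  0;
     0,  1,  0,  1, 0,  0, 0,  1;
     0,  3,  1, -1, 0,  0, 0,  1]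

def diffPreimageCorrection : Matrix (Fin 8) (Fin 2) ℤ :=
  !![3, -3; 0, 1; 2, 0; 0, 0; 2, 1; 1, 1; -1, 0; -3, 0]

theorem brauerForms_mul_diff :
    brauerForms * (M - 1) = (4 : ℤ) • !![0, -1, 0, 0, 0, 1, 0, 0; 0, 1, 0, -1, 0, 0, 0, 0] := by
  decide

theorem diff_mul_preimage :
    (M - 1) * ((4 : ℤ) • diffPreimage + diffPreimageCorrection * brauerForms) =
      (4 : ℤ) • 1 + Matrix.single 0 0 2 * (1 + M + M ^ 2 + M ^ 3) := by
  decide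

theorem norm_mul_brauerLift : (1 + M + M ^ 2 + M ^ 3) * brauerLift = 0 := by
  decide

theorem brauerForms_mul_brauerLift : brauerForms * brauerLift = 1 := by
  decide

theorem stmt_19 :
    Nonempty
      ((↥(LinearMap.ker normMap) ⧸
          Submodule.comap (LinearMap.ker normMap).subtype (LinearMap.range diffMap))
        ≃+ (ZMod 4 × ZMod 4)) := by
  obtain ⟨e⟩ := Matrix.nonempty_ker_quotient_range_equiv four_ne_zero brauerForms_mul_diff
    diff_mul_preimage norm_mul_brauerLift brauerForms_mul_brauerLift
  exact ⟨(e.trans (LinearEquiv.finTwoArrow ℤ (ZMod 4))).toAddEquiv⟩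
end
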